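/- arXiv:1201.0308 — 3 statements merged into one kernel-verified Lean document; each statement's English description precedes it below -/
import Mathlib

section
/- Let D_g ∈ ℝ⟦z⟧ for g ≥ 0 with D_0 invertible (nonzero constant term), and define D*_g recursively by D*_0 := 1 − D_0⁻¹ and, for g ≥ 1, D*_g := −D_0⁻¹ · ((D*_0 − 1)·D_g + Σ_{g₁=1}^{g−1} D*_{g₁}·D_{g−g₁}). Then for every g ≥ 1, D*_g = D_g·D_0⁻² + Σ_{j=0}^{g−2} (−1)^{g+1−j} · D_0^{−(g+1−j)} · ( Σ_{σ} Π_{i=1}^{g−j} D_{σ_i} ), where the inner sum runs over all compositions σ = (σ_1, …, σ_{g−j}) of g into exactly g−j positive parts. -/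
/-- The set of compositions of `g` into exactly `k` positive parts, encoded as
functions `Fin k → ℕ` with all parts in `[1, g]` summing to `g`. -/
def comps (g k : ℕ) : Finset (Fin k → ℕ) :=
  (Fintype.piFinset fun _ : Fin k => Finset.Icc 1 g).filter fun σ => ∑ i, σ i = g

/-! Writing `a = -(D₀)⁻¹`, the recursion reads `D*_g = a² D_g + a ∑ D*_{g₁} D_{g - g₁}`.
Unfolding it, each factor `a` appends one more part to a composition: the sum `S(g, k)` of
`∏ D_{σ_i}` over compositions `σ` of `g` into `k` parts satisfies
`S(g, k + 1) = ∑_{g₁} S(g₁, k) D_{g - g₁}` (split off the last part), and by strong induction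
`D*_g = ∑_{k=1}^{g} a^{k+1} S(g, k)`. Reindexing by `j = g - k` gives the claim. -/

open Finset

lemma mem_comps {g k : ℕ} {σ : Fin k → ℕ} :
    σ ∈ comps g k ↔ (∀ i, 1 ≤ σ i) ∧ ∑ i, σ i = g := by
  simp only [comps, mem_filter, Fintype.mem_piFinset, mem_Icc]
  refine ⟨fun h => ⟨fun i => (h.1 i).1, h.2⟩, fun h => ⟨fun i => ⟨h.1 i, ?_⟩, h.2⟩⟩
  exact h.2 ▸ single_le_sum (fun j _ => Nat.zero_le (σ j)) (mem_univ i)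

lemma card_le_sum_of_one_le {k : ℕ} {σ : Fin k → ℕ} (h : ∀ i, 1 ≤ σ i) : k ≤ ∑ i, σ i := by
  simpa using sum_le_sum fun i (_ : i ∈ univ) => h i

lemma comps_eq_empty_of_lt {g k : ℕ} (h : g < k) : comps g k = ∅ := by
  refine eq_empty_of_forall_notMem fun σ hσ => ?_
  rw [mem_comps] at hσ
  have := card_le_sum_of_one_le hσ.1
  omega

lemma comps_one {g : ℕ} (hg : 1 ≤ g) : comps g 1 = {fun _ => g} := by
  ext σ
  simp only [mem_comps, mem_singleton, Fin.sum_univ_one]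
  refine ⟨fun h => funext fun i => Subsingleton.elim i 0 ▸ h.2, ?_⟩
  rintro rfl
  exact ⟨fun _ => hg, rfl⟩

lemma snoc_mem_comps {g g₁ k : ℕ} {τ : Fin k → ℕ} (hτ : τ ∈ comps g₁ k) (h : g₁ < g) :
    (Fin.snoc τ (g - g₁) : Fin (k + 1) → ℕ) ∈ comps g (k + 1) := by
  rw [mem_comps] at hτ ⊢
  constructor
  · intro i
    induction i using Fin.lastCases with
    | last => simp only [Fin.snoc_last]; omega
    | cast i => simpa only [Fin.snoc_castSucc] using hτ.1 i
  · rw [Fin.sum_univ_castSucc]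
    simp only [Fin.snoc_castSucc, Fin.snoc_last, hτ.2]
    omega

lemma last_eq_of_mem_comps {g k : ℕ} {σ : Fin (k + 1) → ℕ} (hσ : σ ∈ comps g (k + 1)) :
    σ (Fin.last k) = g - ∑ i, Fin.init σ i := by
  have hsum := (mem_comps.1 hσ).2
  rw [Fin.sum_univ_castSucc] at hsum
  exact Nat.eq_sub_of_add_eq' hsum

lemma init_mem_comps {g k : ℕ} (hk : 1 ≤ k) {σ : Fin (k + 1) → ℕ} (hσ : σ ∈ comps g (k + 1)) :
    (∑ i, Fin.init σ i) ∈ Icc 1 (g - 1) ∧ Fin.init σ ∈ comps (∑ i, Fin.init σ i) k := by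
  have hpos := (mem_comps.1 hσ).1
  have hinit : k ≤ ∑ i, Fin.init σ i := card_le_sum_of_one_le fun i => hpos _
  have hlast := last_eq_of_mem_comps hσ
  have := hpos (Fin.last k)
  exact ⟨mem_Icc.2 ⟨by omega, by omega⟩, mem_comps.2 ⟨fun i => hpos _, rfl⟩⟩

section CompSum

variable {R : Type*} [CommSemiring R] (D : ℕ → R)

def compSum (g k : ℕ) : R :=
  ∑ σ ∈ comps g k, ∏ i, D (σ i)

lemma compSum_eq_zero_of_lt {g k : ℕ} (h : g < k) : compSum D g k = 0 := by
  simp only [compSum, comps_eq_empty_of_lt h, sum_empty]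

lemma compSum_one {g : ℕ} (hg : 1 ≤ g) : compSum D g 1 = D g := by
  simp only [compSum, comps_one hg, sum_singleton, Fin.prod_univ_one]

lemma compSum_succ (g : ℕ) {k : ℕ} (hk : 1 ≤ k) :
    compSum D g (k + 1) = ∑ g₁ ∈ Icc 1 (g - 1), compSum D g₁ k * D (g - g₁) := by
  simp only [compSum, sum_mul]
  rw [← sum_sigma (Icc 1 (g - 1)) (fun g₁ => comps g₁ k)
    (fun p => (∏ i, D (p.2 i)) * D (g - p.1))]
  refine sum_nbij' (fun σ => ⟨∑ i, Fin.init σ i, Fin.init σ⟩) (fun p => Fin.snoc p.2 (g - p.1))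
    (fun σ hσ => mem_sigma.2 (init_mem_comps hk hσ)) (fun p hp => ?_) (fun σ hσ => ?_)
    (fun p hp => ?_) (fun σ hσ => ?_)
  · obtain ⟨hg₁, hτ⟩ := mem_sigma.1 hp
    exact snoc_mem_comps hτ (by rw [mem_Icc] at hg₁; omega)
  · simp only [← last_eq_of_mem_comps hσ, Fin.snoc_init_self]
  · obtain ⟨-, hτ⟩ := mem_sigma.1 hp
    simp only [Fin.init_snoc, (mem_comps.1 hτ).2]
  · rw [Fin.prod_univ_castSucc, last_eq_of_mem_comps hσ]
    rfl

theorem eq_sum_compSum_of_rec (u : ℕ → R) (a : R)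
    (hu : ∀ g, 1 ≤ g → u g = a ^ 2 * D g + a * ∑ g₁ ∈ Icc 1 (g - 1), u g₁ * D (g - g₁)) :
    ∀ g, 1 ≤ g → u g = ∑ k ∈ range g, a ^ (k + 2) * compSum D g (k + 1) := by
  intro g
  induction g using Nat.strong_induction_on with
  | _ g ih =>
  intro hg
  have hterm : ∀ g₁ ∈ Icc 1 (g - 1), u g₁ * D (g - g₁) =
      ∑ k ∈ range (g - 1), a ^ (k + 2) * (compSum D g₁ (k + 1) * D (g - g₁)) := by
    intro g₁ hg₁
    rw [mem_Icc] at hg₁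
    rw [ih g₁ (by omega) hg₁.1, sum_mul]
    -- compositions of `g₁` have at most `g₁` parts
    refine sum_subset (range_subset_range.2 hg₁.2) (fun k _ hk => ?_) |>.trans
      (sum_congr rfl fun k _ => mul_assoc _ _ _)
    rw [mem_range] at hk
    rw [compSum_eq_zero_of_lt D (by omega), mul_zero, zero_mul]
  obtain ⟨n, rfl⟩ := Nat.exists_eq_add_of_le' hg
  rw [hu _ hg, sum_congr rfl hterm, sum_comm, sum_range_succ', compSum_one D hg,
    add_comm (∑ k ∈ range n, _), zero_add, mul_sum]
  congr 1
  refine sum_congr rfl fun k _ => ?_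
  rw [← mul_sum, compSum_succ D (n + 1) k.succ_pos, Nat.add_sub_cancel]
  ring

end CompSum

theorem stmt_1_general (D : ℕ → PowerSeries ℝ)
    (Dstar : ℕ → PowerSeries ℝ)
    (hDs0 : Dstar 0 = 1 - (D 0)⁻¹)
    (hDsg : ∀ g, 1 ≤ g →
      Dstar g = -(D 0)⁻¹ * ((Dstar 0 - 1) * D g +
        ∑ g₁ ∈ Finset.Icc 1 (g - 1), Dstar g₁ * D (g - g₁))) :
    ∀ g, 1 ≤ g →
      Dstar g = D g * ((D 0)⁻¹) ^ 2 +
        ∑ j ∈ Finset.range (g - 1),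
          (-1 : PowerSeries ℝ) ^ (g + 1 - j) * ((D 0)⁻¹) ^ (g + 1 - j) *
            ∑ σ ∈ comps g (g - j), ∏ i, D (σ i) := by
  have hrec : ∀ g, 1 ≤ g → Dstar g = (-(D 0)⁻¹) ^ 2 * D g +
      -(D 0)⁻¹ * ∑ g₁ ∈ Icc 1 (g - 1), Dstar g₁ * D (g - g₁) := by
    intro g hg
    rw [hDsg g hg, hDs0]
    ring
  intro g hg
  obtain ⟨n, rfl⟩ := Nat.exists_eq_add_of_le' hg
  rw [eq_sum_compSum_of_rec D Dstar _ hrec _ hg, sum_range_succ', compSum_one D hg, add_comm,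
    Nat.add_sub_cancel, ← sum_range_reflect _ n]
  congr 1
  · ring
  · refine sum_congr rfl fun j hj => ?_
    rw [mem_range] at hj
    rw [show n - 1 - j + 1 + 2 = n + 1 + 1 - j by omega, show n - 1 - j + 1 + 1 = n + 1 - j by omega,
      neg_pow]
    rfl

/-- The Claim (eq. E:irr_exp): the closed composition-sum formula for the
irreducible-structure generating functions `D*_g` defined by the recursion of
Lemma irr_rec. -/
theorem stmt_1 (D : ℕ → PowerSeries ℝ)
    (hD0 : PowerSeries.constantCoeff (D 0) ≠ 0)
    (Dstar : ℕ → PowerSeries ℝ)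
    (hDs0 : Dstar 0 = 1 - (D 0)⁻¹)
    (hDsg : ∀ g, 1 ≤ g →
      Dstar g = -(D 0)⁻¹ * ((Dstar 0 - 1) * D g +
        ∑ g₁ ∈ Finset.Icc 1 (g - 1), Dstar g₁ * D (g - g₁))) :
    ∀ g, 1 ≤ g →
      Dstar g = D g * ((D 0)⁻¹) ^ 2 +
        ∑ j ∈ Finset.range (g - 1),
          (-1 : PowerSeries ℝ) ^ (g + 1 - j) * ((D 0)⁻¹) ^ (g + 1 - j) *
            ∑ σ ∈ comps g (g - j), ∏ i, D (σ i) :=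
  stmt_1_general D Dstar hDs0 hDsg
end

section
/- In ℝ⟦z⟧ let q := 1 − z + z², u := z²·q⁻², and let s be the unique formal power series with s² = 1 − 4u and constant term 1. Let P_g ∈ ℝ[X] for g ≥ 1 satisfy X^{2g} ∣ P_g. Define D_0 := 2·q⁻¹·(1 + s)⁻¹ and, for g ≥ 1, D_g := q⁻¹·P_g(u)·s·(1 − 4u)^{−3g} (so that D_g = q⁻¹·P_g(u)/(1 − 4u)^{3g − 1/2}), and define D*_g by the recursion D*_0 := 1 − D_0⁻¹ and D*_g := −D_0⁻¹·((D*_0 − 1)·D_g + Σ_{g₁=1}^{g−1} D*_{g₁}·D_{g−g₁}) for g ≥ 1. Then for every g ≥ 1 there exist polynomials U_g, V_g ∈ ℝ[X] such that: (i) X^{2g} ∣ U_g and X^{2g} ∣ V_g; (ii) D*_g = q·( U_g(u)·s·(1 − 4u)^{−3g} + V_g(u)·(1 − 4u)^{−(3g−1)} ); (iii) U_g(1/4) = P_g(1/4)/4; and (iv) V_g(1/4) = ( 4·P_g(1/4) − Σ_{j=1}^{g−1} P_j(1/4)·P_{g−j}(1/4) ) / 8. -/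
open Polynomial PowerSeries

/-!
Write `w = 1 - 4u`, `W = w⁻¹` and `N_g = U_g(u)·s + V_g(u)·w`. Since `w·W^{3g} = W^{3g-1}`,
the claim is `D*_g = q·N_g·W^{3g}`. Using `D_0⁻¹ = q(1+s)/2` and `D_j = q⁻¹·P_j(u)·s·W^{3j}`,
the factors `q` and the powers of `W` cancel from the recursion for `D*_g`, which becomes
`N_g = (1+s)s/2 · ((1+s)/2 · P_g(u) - Σ_j N_j·P_{g-j}(u))`.
As `s² = w`, multiplication by `(1+s)s = s + w` sends `a·s + b·w` to `(a+b)w·s + (a+bw)·w`,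
so this recursion stays in the span of `s` and `w` over `ℝ[u]` and defines `U_g, V_g`.
Every product `N_j·P_{g-j}` is divisible by `u^{2g}`, and at `u = 1/4`, where `w = 0`,
only `U_j(1/4) = P_j(1/4)/4` survives in the recursive terms.
-/

noncomputable def irrUV (P : ℕ → ℝ[X]) : ℕ → ℝ[X] × ℝ[X]
  | g =>
    (Polynomial.C (1 / 2) * P g * (1 - 2 * Polynomial.X) -
        Polynomial.C (1 / 2) * (1 - 4 * Polynomial.X) *
          ∑ j ∈ (Finset.Icc 1 (g - 1)).attach, ((irrUV P j).1 + (irrUV P j).2) * P (g - j),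
     Polynomial.C (1 / 2) * P g -
        Polynomial.C (1 / 2) *
          ∑ j ∈ (Finset.Icc 1 (g - 1)).attach,
            ((irrUV P j).1 + (irrUV P j).2 * (1 - 4 * Polynomial.X)) * P (g - j))
  termination_by g => g
  decreasing_by all_goals (have := Finset.mem_Icc.mp j.2; omega)

theorem pow_mul_dvd_sum_Icc_mul {R : Type*} [CommSemiring R] {x : R} {k : ℕ} {P Q : ℕ → R}
    (hP : ∀ g, 1 ≤ g → x ^ (k * g) ∣ P g) (g : ℕ)
    (hQ : ∀ j ∈ Finset.Icc 1 (g - 1), x ^ (k * j) ∣ Q j) :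
    x ^ (k * g) ∣ ∑ j ∈ Finset.Icc 1 (g - 1), Q j * P (g - j) := by
  refine Finset.dvd_sum fun j hj => ?_
  obtain ⟨h1, h2⟩ := Finset.mem_Icc.mp hj
  have hsplit : k * g = k * j + k * (g - j) := by rw [← mul_add]; congr 1; omega
  rw [hsplit, pow_add]
  exact mul_dvd_mul (hQ j hj) (hP (g - j) (by omega))

section Polynomials

variable (P : ℕ → ℝ[X])

theorem irrUV_fst (g : ℕ) :
    (irrUV P g).1 = Polynomial.C (1 / 2) * P g * (1 - 2 * Polynomial.X) -
      Polynomial.C (1 / 2) * (1 - 4 * Polynomial.X) *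
        ∑ j ∈ Finset.Icc 1 (g - 1), ((irrUV P j).1 + (irrUV P j).2) * P (g - j) := by
  rw [irrUV, Finset.sum_attach (Finset.Icc 1 (g - 1))
    (fun j => ((irrUV P j).1 + (irrUV P j).2) * P (g - j))]

theorem irrUV_snd (g : ℕ) :
    (irrUV P g).2 = Polynomial.C (1 / 2) * P g -
      Polynomial.C (1 / 2) *
        ∑ j ∈ Finset.Icc 1 (g - 1),
          ((irrUV P j).1 + (irrUV P j).2 * (1 - 4 * Polynomial.X)) * P (g - j) := by
  rw [irrUV, Finset.sum_attach (Finset.Icc 1 (g - 1))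
    (fun j => ((irrUV P j).1 + (irrUV P j).2 * (1 - 4 * Polynomial.X)) * P (g - j))]

theorem eval_irrUV_fst_quarter (g : ℕ) :
    (irrUV P g).1.eval (1 / 4) = (P g).eval (1 / 4) / 4 := by
  rw [irrUV_fst]
  simp only [eval_sub, eval_mul, eval_C, eval_one, eval_ofNat, eval_X]
  ring

theorem eval_irrUV_snd_quarter (g : ℕ) :
    (irrUV P g).2.eval (1 / 4) =
      (4 * (P g).eval (1 / 4) -
        ∑ j ∈ Finset.Icc 1 (g - 1), (P j).eval (1 / 4) * (P (g - j)).eval (1 / 4)) / 8 := by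
  have hterm : ∀ j ∈ Finset.Icc 1 (g - 1),
      (((irrUV P j).1 + (irrUV P j).2 * (1 - 4 * Polynomial.X)) * P (g - j)).eval (1 / 4) =
        (P j).eval (1 / 4) * (P (g - j)).eval (1 / 4) / 4 := by
    intro j _
    simp only [eval_add, eval_mul, eval_sub, eval_one, eval_ofNat, eval_X, eval_irrUV_fst_quarter]
    ring
  rw [irrUV_snd, eval_sub, eval_mul, eval_mul, eval_finsetSum, Finset.sum_congr rfl hterm,
    ← Finset.sum_div, eval_C]
  ring

theorem X_pow_dvd_irrUV (hP : ∀ g, 1 ≤ g → (Polynomial.X : ℝ[X]) ^ (2 * g) ∣ P g)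
    (g : ℕ) (hg : 1 ≤ g) :
    (Polynomial.X : ℝ[X]) ^ (2 * g) ∣ (irrUV P g).1 ∧
      (Polynomial.X : ℝ[X]) ^ (2 * g) ∣ (irrUV P g).2 := by
  induction g using Nat.strong_induction_on with
  | _ g ih =>
    have hU (j) (hj : j ∈ Finset.Icc 1 (g - 1)) := ih j (by grind) (Finset.mem_Icc.mp hj).1
    constructor
    · rw [irrUV_fst]
      refine dvd_sub (((hP g hg).mul_left _).mul_right _) (Dvd.dvd.mul_left ?_ _)
      exact pow_mul_dvd_sum_Icc_mul hP g fun j hj => dvd_add (hU j hj).1 (hU j hj).2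
    · rw [irrUV_snd]
      refine dvd_sub ((hP g hg).mul_left _) (Dvd.dvd.mul_left ?_ _)
      exact pow_mul_dvd_sum_Icc_mul hP g fun j hj => dvd_add (hU j hj).1 ((hU j hj).2.mul_right _)

end Polynomials

section Algebra

variable {A : Type*} [CommRing A]

theorem one_add_mul_self_mul_of_sq_eq {s w : A} (hs : s ^ 2 = w) (a b : A) :
    (1 + s) * s * (a * s + b * w) = (a + b) * w * s + (a + b * w) * w := by
  linear_combination (a + a * s + b * w) * hs

theorem mul_pow_eq_pow_pred_of_mul_eq_one {w W : A} (hW : w * W = 1) {n : ℕ} (hn : n ≠ 0) :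
    w * W ^ n = W ^ (n - 1) := by
  obtain ⟨m, rfl⟩ := Nat.exists_eq_succ_of_ne_zero hn
  rw [pow_succ, mul_left_comm, hW, mul_one, Nat.succ_sub_one]

variable [Algebra ℝ A]

noncomputable def irrNum (P : ℕ → ℝ[X]) (u s : A) (g : ℕ) : A :=
  aeval u (irrUV P g).1 * s + aeval u (irrUV P g).2 * (1 - 4 * u)

theorem irrNum_eq (P : ℕ → ℝ[X]) {u s : A} (hs : s ^ 2 = 1 - 4 * u) (g : ℕ) :
    irrNum P u s g = algebraMap ℝ A (1 / 2) * ((1 + s) * s *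
      (algebraMap ℝ A (1 / 2) * (1 + s) * aeval u (P g) -
        ∑ j ∈ Finset.Icc 1 (g - 1), irrNum P u s j * aeval u (P (g - j)))) := by
  set c := algebraMap ℝ A (1 / 2)
  have hc : c * 2 = 1 := by rw [← map_ofNat (algebraMap ℝ A) 2, ← map_mul]; norm_num
  have hsum : (1 + s) * s * ∑ j ∈ Finset.Icc 1 (g - 1), irrNum P u s j * aeval u (P (g - j)) =
      (1 - 4 * u) * s * ∑ j ∈ Finset.Icc 1 (g - 1),
          (aeval u (irrUV P j).1 + aeval u (irrUV P j).2) * aeval u (P (g - j)) +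
        (1 - 4 * u) * ∑ j ∈ Finset.Icc 1 (g - 1),
          (aeval u (irrUV P j).1 + aeval u (irrUV P j).2 * (1 - 4 * u)) * aeval u (P (g - j)) := by
    simp only [Finset.mul_sum, ← Finset.sum_add_distrib]
    refine Finset.sum_congr rfl fun j _ => ?_
    rw [irrNum]
    linear_combination aeval u (P (g - j)) *
      one_add_mul_self_mul_of_sq_eq hs (aeval u (irrUV P j).1) (aeval u (irrUV P j).2)
  rw [mul_sub (_ * s), hsum, irrNum, irrUV_fst, irrUV_snd]
  simp only [map_sub, map_mul, map_add, map_one, map_ofNat, aeval_X, aeval_C, map_sum]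
  linear_combination c * aeval u (P g) * (2 * u * s - s + 4 * u - 1) * hc -
    c ^ 2 * aeval u (P g) * (2 + s) * hs

theorem eq_mul_irrNum_mul_pow {q q' u s d : A} {W : A} (hq : q * q' = 1)
    (hs : s ^ 2 = 1 - 4 * u) (hd : 2 * d = q * (1 + s)) (P : ℕ → ℝ[X]) {D Dstar : ℕ → A}
    (hDg : ∀ g, 1 ≤ g → D g = q' * aeval u (P g) * s * W ^ (3 * g))
    (hDs0 : Dstar 0 = 1 - d)
    (hDsg : ∀ g, 1 ≤ g → Dstar g = -d * ((Dstar 0 - 1) * D g +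
      ∑ g₁ ∈ Finset.Icc 1 (g - 1), Dstar g₁ * D (g - g₁)))
    (g : ℕ) (hg : 1 ≤ g) :
    Dstar g = q * irrNum P u s g * W ^ (3 * g) := by
  induction g using Nat.strong_induction_on with
  | _ g ih =>
    set c := algebraMap ℝ A (1 / 2)
    have hc : c * 2 = 1 := by rw [← map_ofNat (algebraMap ℝ A) 2, ← map_mul]; norm_num
    have hterm : ∀ j ∈ Finset.Icc 1 (g - 1), Dstar j * D (g - j) =
        s * W ^ (3 * g) * (irrNum P u s j * aeval u (P (g - j))) := by
      intro j hj
      obtain ⟨hj1, hj2⟩ := Finset.mem_Icc.mp hj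
      have hpow : W ^ (3 * j) * W ^ (3 * (g - j)) = W ^ (3 * g) := by
        rw [← pow_add]; congr 1; omega
      rw [ih j (by omega) hj1, hDg (g - j) (by omega)]
      linear_combination s * irrNum P u s j * aeval u (P (g - j)) *
        (W ^ (3 * j) * W ^ (3 * (g - j)) * hq + hpow)
    have hdc : d = c * (q * (1 + s)) := by linear_combination c * hd - d * hc
    rw [hDsg g hg, hDs0, Finset.sum_congr rfl hterm, ← Finset.mul_sum, irrNum_eq P hs, hDg g hg,
      hdc]
    linear_combination (c ^ 2 * q * (1 + s) ^ 2 * aeval u (P g) * s * W ^ (3 * g)) * hq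

end Algebra

/-- Theorem T:irr (a), structural part: given the representation
`D_g = q⁻¹ · P_g(u) · s · (1-4u)^{-3g}` (i.e. `D_g = q⁻¹·P_g(u)/(1-4u)^{3g-1/2}`)
with `X^{2g} ∣ P_g`, the generating functions `D*_g` of irreducible genus-`g`
structures defined by the recursion of Lemma irr_rec have the form
`q · ( U_g(u)·s·(1-4u)^{-3g} + V_g(u)·(1-4u)^{-(3g-1)} )` with `X^{2g} ∣ U_g`,
`X^{2g} ∣ V_g`, `U_g(1/4) = P_g(1/4)/4` and
`V_g(1/4) = (4·P_g(1/4) - ∑_{j=1}^{g-1} P_j(1/4)·P_{g-j}(1/4))/8`. -/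
theorem stmt_3 (q u s : PowerSeries ℝ)
    (hq : q = 1 - PowerSeries.X + PowerSeries.X ^ 2)
    (hu : u = PowerSeries.X ^ 2 * (q⁻¹) ^ 2)
    (hs2 : s ^ 2 = 1 - 4 * u)
    (hs0 : PowerSeries.constantCoeff (R := ℝ) s = 1)
    (P : ℕ → ℝ[X])
    (hP : ∀ g, 1 ≤ g → (Polynomial.X : ℝ[X]) ^ (2 * g) ∣ P g)
    (D : ℕ → PowerSeries ℝ)
    (hD0 : D 0 = 2 * q⁻¹ * (1 + s)⁻¹)
    (hDg : ∀ g, 1 ≤ g →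
      D g = q⁻¹ * Polynomial.aeval u (P g) * s * ((1 - 4 * u)⁻¹) ^ (3 * g))
    (Dstar : ℕ → PowerSeries ℝ)
    (hDs0 : Dstar 0 = 1 - (D 0)⁻¹)
    (hDsg : ∀ g, 1 ≤ g →
      Dstar g = -(D 0)⁻¹ * ((Dstar 0 - 1) * D g +
        ∑ g₁ ∈ Finset.Icc 1 (g - 1), Dstar g₁ * D (g - g₁))) :
    ∀ g, 1 ≤ g → ∃ U V : ℝ[X],
      (Polynomial.X : ℝ[X]) ^ (2 * g) ∣ U ∧
      (Polynomial.X : ℝ[X]) ^ (2 * g) ∣ V ∧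
      Dstar g = q * (Polynomial.aeval u U * s * ((1 - 4 * u)⁻¹) ^ (3 * g) +
        Polynomial.aeval u V * ((1 - 4 * u)⁻¹) ^ (3 * g - 1)) ∧
      Polynomial.eval (1 / 4 : ℝ) U = Polynomial.eval (1 / 4 : ℝ) (P g) / 4 ∧
      Polynomial.eval (1 / 4 : ℝ) V =
        (4 * Polynomial.eval (1 / 4 : ℝ) (P g) -
          ∑ j ∈ Finset.Icc 1 (g - 1),
            Polynomial.eval (1 / 4 : ℝ) (P j) *
              Polynomial.eval (1 / 4 : ℝ) (P (g - j))) / 8 := by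
  intro g hg
  have hqq : q * q⁻¹ = 1 := PowerSeries.mul_inv_cancel q (by simp [hq])
  have hW : (1 - 4 * u) * (1 - 4 * u)⁻¹ = 1 := PowerSeries.mul_inv_cancel _ (by simp [hu])
  have hss : (1 + s) * (1 + s)⁻¹ = 1 := PowerSeries.mul_inv_cancel _ (by simp [hs0])
  have hD0_mul : D 0 * (q * (1 + s)) = 2 := by
    rw [hD0]; linear_combination (2 * (1 + s)⁻¹ * (1 + s)) * hqq + 2 * hss
  have hD0ne : PowerSeries.constantCoeff (D 0) ≠ 0 := by
    apply left_ne_zero_of_mul (b := PowerSeries.constantCoeff (q * (1 + s)))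
    rw [← map_mul, hD0_mul, map_ofNat]; norm_num
  have hd : 2 * (D 0)⁻¹ = q * (1 + s) := by
    rw [← hD0_mul]; linear_combination q * (1 + s) * PowerSeries.mul_inv_cancel _ hD0ne
  refine ⟨_, _, (X_pow_dvd_irrUV P hP g hg).1, (X_pow_dvd_irrUV P hP g hg).2, ?_,
    eval_irrUV_fst_quarter P g, eval_irrUV_snd_quarter P g⟩
  rw [eq_mul_irrNum_mul_pow hqq hs2 hd P hDg hDs0 hDsg g hg, irrNum,
    ← mul_pow_eq_pow_pred_of_mul_eq_one hW (by omega)]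
  ring
end

section
/- Let W ∈ ℝ⟦z⟧ be the unique formal power series with constant term 0 satisfying W = (6/16)·e^{1/2}·z³·(1 − z)⁻¹ + (6/16)·e·z²·(1 − z)⁻²·W + (6/16)·e^{−5}·z²·( W·(1 − z)⁻¹ )²·( 1 − W·(1 − z)⁻¹ )⁻¹·(1 − z)⁻¹, and let F := (1 − z)⁻¹·( 1 − W·(1 − z)⁻¹ )⁻¹ ∈ ℝ⟦z⟧. Write w(n) and f(n) for the coefficients of z^n in W and F. Then w(0) = w(1) = w(2) = 0, w(n) > 0 for every n ≥ 3, and f(n) ≥ 1 for every n ≥ 0. -/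
/-!
Put `A = (1 - z)⁻¹ = ∑ zⁿ` and `G = (1 - W A)⁻¹`, so that `G = 1 + W A G` and `F = A G`.
Since `z` divides `W`, the equations express the coefficients of `z^(n+1)` in `W` and in `G`
as polynomials with nonnegative coefficients in the coefficients of `W`, `G` of degree at
most `n`; by induction `W` and `G` have nonnegative coefficients. The source term
`(6/16) e^{1/2} z³ A` then contributes `(6/16) e^{1/2}` to every `w(n)` with `n ≥ 3`, and
`f(n) ≥ [zⁿ]A · g(0) = 1`.
-/

open PowerSeries

namespace PowerSeries

section CoeffNonnegUpTo

variable {R : Type*} [Semiring R] [PartialOrder R]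

def CoeffNonnegUpTo (n : ℕ) (p : R⟦X⟧) : Prop := ∀ i ≤ n, 0 ≤ coeff i p

namespace CoeffNonnegUpTo

variable {n : ℕ} {p q : R⟦X⟧}

lemma of_forall (h : ∀ i, 0 ≤ coeff i p) : CoeffNonnegUpTo n p := fun i _ => h i

lemma X_mul_zero : CoeffNonnegUpTo 0 (PowerSeries.X * p) := fun i hi => by
  obtain rfl : i = 0 := by omega
  simp

lemma X_mul (hp : CoeffNonnegUpTo n p) : CoeffNonnegUpTo (n + 1) (PowerSeries.X * p) := by
  rintro (_ | i) hi
  · simp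
  · rw [coeff_succ_X_mul]
    exact hp i (by omega)

lemma C {c : R} (hc : 0 ≤ c) : CoeffNonnegUpTo n (PowerSeries.C c) :=
  of_forall fun i => by rw [coeff_C]; split_ifs <;> simp [hc]

variable [IsOrderedRing R]

lemma add (hp : CoeffNonnegUpTo n p) (hq : CoeffNonnegUpTo n q) :
    CoeffNonnegUpTo n (p + q) := fun i hi => by
  rw [map_add]
  exact add_nonneg (hp i hi) (hq i hi)

lemma mul (hp : CoeffNonnegUpTo n p) (hq : CoeffNonnegUpTo n q) :
    CoeffNonnegUpTo n (p * q) := fun i hi => by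
  rw [coeff_mul]
  refine Finset.sum_nonneg fun x hx => ?_
  rw [Finset.HasAntidiagonal.mem_antidiagonal] at hx
  exact mul_nonneg (hp _ (by omega)) (hq _ (by omega))

lemma one : CoeffNonnegUpTo n (1 : R⟦X⟧) :=
  of_forall fun i => by rw [coeff_one]; split_ifs <;> simp

lemma pow (hp : CoeffNonnegUpTo n p) (k : ℕ) : CoeffNonnegUpTo n (p ^ k) := by
  induction k with
  | zero => simpa using one
  | succ k ih => simpa [pow_succ] using ih.mul hp

lemma X : CoeffNonnegUpTo n (PowerSeries.X : R⟦X⟧) :=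
  of_forall fun i => by rw [coeff_X]; split_ifs <;> simp

lemma coeff_mul_coeff_zero_le (hp : CoeffNonnegUpTo n p) (hq : CoeffNonnegUpTo n q) :
    coeff n p * coeff 0 q ≤ coeff n (p * q) := by
  rw [coeff_mul]
  refine Finset.single_le_sum (f := fun x : ℕ × ℕ => coeff x.1 p * coeff x.2 q)
    (fun x hx => ?_) (a := (n, 0)) (by simp)
  rw [Finset.HasAntidiagonal.mem_antidiagonal] at hx
  exact mul_nonneg (hp _ (by omega)) (hq _ (by omega))

end CoeffNonnegUpTo

end CoeffNonnegUpTo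

lemma inv_one_sub_X_eq_mk_one {k : Type*} [Field k] : (1 - X : k⟦X⟧)⁻¹ = mk 1 :=
  ((eq_inv_iff_mul_eq_one (by simp)).mpr (mk_one_mul_one_sub_eq_one k)).symm

lemma inv_one_sub_eq_one_add_mul_inv {k : Type*} [Field k] {q : k⟦X⟧}
    (hq : constantCoeff q = 0) : (1 - q)⁻¹ = 1 + q * (1 - q)⁻¹ := by
  have h := PowerSeries.mul_inv_cancel (1 - q) (by simp [hq])
  linear_combination h

end PowerSeries

section LoopEquations

variable {R : Type*} [CommSemiring R] {W G A : R⟦X⟧} {c₁ c₂ c₃ : R}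

theorem X_pow_three_dvd_of_loopEquation
    (hW : W = C c₁ * X ^ 3 * A + C c₂ * X ^ 2 * A ^ 2 * W
      + C c₃ * X ^ 2 * (W * A) ^ 2 * G * A) :
    X ^ 3 ∣ W := by
  obtain ⟨V, hV⟩ : X ∣ W := X_dvd_iff.mpr (by rw [hW]; simp)
  refine ⟨C c₁ * A + C c₂ * A ^ 2 * V + C c₃ * X * (V * A) ^ 2 * G * A, ?_⟩
  conv_lhs => rw [hW]
  rw [hV]
  ring

variable [PartialOrder R]

theorem coeffNonnegUpTo_of_loopEquations [IsOrderedRing R] (hc₁ : 0 ≤ c₁) (hc₂ : 0 ≤ c₂)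
    (hc₃ : 0 ≤ c₃) (hA : ∀ i, 0 ≤ coeff i A)
    (hW : W = C c₁ * X ^ 3 * A + C c₂ * X ^ 2 * A ^ 2 * W
      + C c₃ * X ^ 2 * (W * A) ^ 2 * G * A)
    (hG : G = 1 + W * A * G) (n : ℕ) : CoeffNonnegUpTo n W ∧ CoeffNonnegUpTo n G := by
  set V := C c₁ * X ^ 2 * A + C c₂ * X * A ^ 2 * W + C c₃ * X * (W * A) ^ 2 * G * A
  have hWV : W = X * V := by
    conv_lhs => rw [hW]
    ring
  have hGV : G = 1 + X * (V * A * G) := by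
    conv_lhs => rw [hG]
    rw [hWV]
    ring
  induction n with
  | zero =>
    rw [hGV, hWV]
    exact ⟨.X_mul_zero, CoeffNonnegUpTo.one.add .X_mul_zero⟩
  | succ n ih =>
    obtain ⟨ihW, ihG⟩ := ih
    have hA' : CoeffNonnegUpTo n A := .of_forall hA
    have hV : CoeffNonnegUpTo n V :=
      ((((CoeffNonnegUpTo.C hc₁).mul (.pow .X 2)).mul hA').add
        ((((CoeffNonnegUpTo.C hc₂).mul .X).mul (hA'.pow 2)).mul ihW)).add
        (((((CoeffNonnegUpTo.C hc₃).mul .X).mul ((ihW.mul hA').pow 2)).mul ihG).mul hA')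
    rw [hGV, hWV]
    exact ⟨hV.X_mul, CoeffNonnegUpTo.one.add ((hV.mul hA').mul ihG).X_mul⟩

theorem coeff_pos_of_loopEquations [IsStrictOrderedRing R] (hc₁ : 0 < c₁) (hc₂ : 0 ≤ c₂)
    (hc₃ : 0 ≤ c₃) (hA : ∀ i, 0 < coeff i A)
    (hW : W = C c₁ * X ^ 3 * A + C c₂ * X ^ 2 * A ^ 2 * W
      + C c₃ * X ^ 2 * (W * A) ^ 2 * G * A)
    (hG : G = 1 + W * A * G) {n : ℕ} (hn : 3 ≤ n) : 0 < coeff n W := by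
  have hA' : CoeffNonnegUpTo n A := .of_forall fun i => (hA i).le
  obtain ⟨hWn, hGn⟩ :=
    coeffNonnegUpTo_of_loopEquations hc₁.le hc₂ hc₃ (fun i => (hA i).le) hW hG n
  have hsource : coeff n (C c₁ * X ^ 3 * A) = c₁ * coeff (n - 3) A := by
    rw [mul_assoc, coeff_C_mul, coeff_X_pow_mul', if_pos hn]
  have hrest : CoeffNonnegUpTo n
      (C c₂ * X ^ 2 * A ^ 2 * W + C c₃ * X ^ 2 * (W * A) ^ 2 * G * A) :=
    ((((CoeffNonnegUpTo.C hc₂).mul (.pow .X 2)).mul (hA'.pow 2)).mul hWn).add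
      (((((CoeffNonnegUpTo.C hc₃).mul (.pow .X 2)).mul ((hWn.mul hA').pow 2)).mul hGn).mul hA')
  rw [hW, add_assoc, map_add, hsource]
  exact add_pos_of_pos_of_nonneg (mul_pos hc₁ (hA _)) (hrest n le_rfl)

end LoopEquations

theorem stmt_6_general (W F : PowerSeries ℝ)
    (hWeq : W = PowerSeries.C (6 / 16 * Real.exp (1 / 2)) * PowerSeries.X ^ 3 *
            (1 - PowerSeries.X)⁻¹
        + PowerSeries.C (6 / 16 * Real.exp 1) * PowerSeries.X ^ 2 *
            ((1 - PowerSeries.X)⁻¹) ^ 2 * W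
        + PowerSeries.C (6 / 16 * Real.exp (-5)) * PowerSeries.X ^ 2 *
            (W * (1 - PowerSeries.X)⁻¹) ^ 2 *
            (1 - W * (1 - PowerSeries.X)⁻¹)⁻¹ * (1 - PowerSeries.X)⁻¹)
    (hF : F = (1 - PowerSeries.X)⁻¹ * (1 - W * (1 - PowerSeries.X)⁻¹)⁻¹) :
    PowerSeries.coeff 0 W = 0 ∧
    PowerSeries.coeff 1 W = 0 ∧
    PowerSeries.coeff 2 W = 0 ∧
    (∀ n, 3 ≤ n → 0 < PowerSeries.coeff n W) ∧
    (∀ n, 1 ≤ PowerSeries.coeff n F) := by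
  set A : ℝ⟦X⟧ := (1 - X)⁻¹
  set G : ℝ⟦X⟧ := (1 - W * A)⁻¹
  have hc₁ : 0 < 6 / 16 * Real.exp (1 / 2) := by positivity
  have hc₂ : 0 ≤ 6 / 16 * Real.exp 1 := by positivity
  have hc₃ : 0 ≤ 6 / 16 * Real.exp (-5) := by positivity
  have hA : ∀ i, coeff i A = 1 := fun i => by simp [A, inv_one_sub_X_eq_mk_one]
  have hX3 : X ^ 3 ∣ W := X_pow_three_dvd_of_loopEquation hWeq
  have hW0 : constantCoeff W = 0 := X_dvd_iff.mp ((dvd_pow_self X three_ne_zero).trans hX3)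
  have hG : G = 1 + W * A * G := inv_one_sub_eq_one_add_mul_inv (by simp [hW0])
  have hG0 : coeff 0 G = 1 := by rw [hG]; simp [hW0]
  have hA_pos : ∀ i, 0 < coeff i A := fun i => (hA i).symm ▸ one_pos
  refine ⟨X_pow_dvd_iff.mp hX3 0 (by norm_num), X_pow_dvd_iff.mp hX3 1 (by norm_num),
    X_pow_dvd_iff.mp hX3 2 (by norm_num),
    fun n hn => coeff_pos_of_loopEquations hc₁ hc₂ hc₃ hA_pos hWeq hG hn, fun n => ?_⟩
  have hA_nonneg : CoeffNonnegUpTo n A := .of_forall fun i => (hA_pos i).le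
  have hG_nonneg : CoeffNonnegUpTo n G :=
    (coeffNonnegUpTo_of_loopEquations hc₁.le hc₂ hc₃ (fun i => (hA_pos i).le) hWeq hG n).2
  calc (1 : ℝ) = coeff n A * coeff 0 G := by rw [hA, hG0, one_mul]
    _ ≤ coeff n F := hF ▸ hA_nonneg.coeff_mul_coeff_zero_le hG_nonneg

/-- Coefficient positivity (proof of Lemma eumel33): for the energy-weighted
generating function `W = F*_0(z)` of irreducible secondary structures and
`F = F_0(z) = (1-z)⁻¹(1 - W(1-z)⁻¹)⁻¹`, one has `w(0) = w(1) = w(2) = 0`,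
`w(n) > 0` for `n ≥ 3`, and `f(n) ≥ 1` for all `n`. -/
theorem stmt_6 (W F : PowerSeries ℝ)
    (hW0 : PowerSeries.constantCoeff W = 0)
    (hWeq : W = PowerSeries.C (6 / 16 * Real.exp (1 / 2)) * PowerSeries.X ^ 3 *
            (1 - PowerSeries.X)⁻¹
        + PowerSeries.C (6 / 16 * Real.exp 1) * PowerSeries.X ^ 2 *
            ((1 - PowerSeries.X)⁻¹) ^ 2 * W
        + PowerSeries.C (6 / 16 * Real.exp (-5)) * PowerSeries.X ^ 2 *
            (W * (1 - PowerSeries.X)⁻¹) ^ 2 *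
            (1 - W * (1 - PowerSeries.X)⁻¹)⁻¹ * (1 - PowerSeries.X)⁻¹)
    (hF : F = (1 - PowerSeries.X)⁻¹ * (1 - W * (1 - PowerSeries.X)⁻¹)⁻¹) :
    PowerSeries.coeff 0 W = 0 ∧
    PowerSeries.coeff 1 W = 0 ∧
    PowerSeries.coeff 2 W = 0 ∧
    (∀ n, 3 ≤ n → 0 < PowerSeries.coeff n W) ∧
    (∀ n, 1 ≤ PowerSeries.coeff n F) :=
  stmt_6_general W F hWeq hF
end
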